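/- Let s, t be fixed nonnegative integers with s + t ≥ 3 and t ≥ 1. There is a constant C, depending only on s and t, such that for every integer n ≥ 2 and all indices l_1,…,l_s, h_1,…,h_{2t} ∈ {1,…,n}, the joint cumulant of the 2s+2t variables (Z_{l_1}, Z_{l_1}, Z_{l_2}, Z_{l_2}, …, Z_{l_s}, Z_{l_s}, Z_{h_1}, …, Z_{h_{2t}}) (each l-index appearing twice) satisfies |C(Z_{l_1},Z_{l_1},…,Z_{l_s},Z_{l_s},Z_{h_1},…,Z_{h_{2t}})| ≤ C·Σ_{σ ∈ L_{2t}^2} |E_σ(Z_{h_1},…,Z_{h_{2t}})|, where for a perfect matching σ of {1,…,2t}, E_σ(Z_{h_1},…,Z_{h_{2t}}) = Π_{{a,b}∈σ} E[Z_{h_a} Z_{h_b}]. -/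

import Mathlib

open MeasureTheory ProbabilityTheory Finset

noncomputable section

instance permMS (n : ℕ) : MeasurableSpace (Equiv.Perm (Fin n)) := ⊤

/-- The uniform probability measure on the set of all `n!` permutations of `{1,…,n}`. -/
def permMeasure (n : ℕ) : Measure (Equiv.Perm (Fin n)) :=
  (PMF.uniformOfFintype (Equiv.Perm (Fin n))).toMeasure

/-- The rank `Q_i` of the random permutation, as a real number in `{1,…,n}`. -/
def Qr (n : ℕ) (i : Fin n) (σ : Equiv.Perm (Fin n)) : ℝ := (σ i : ℕ) + 1

/-- The centralized and normalized rank `Z_i = sqrt(12/(n²−1))·(Q_i − (n+1)/2)`. -/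
def Zr (n : ℕ) (i : Fin n) (σ : Equiv.Perm (Fin n)) : ℝ :=
  Real.sqrt (12 / ((n : ℝ) ^ 2 - 1)) * (Qr n i σ - ((n : ℝ) + 1) / 2)

attribute [local instance] Classical.propDecidable

/-- `P` is a set partition of the (finite) index type `ι`: its blocks are nonempty and
every index lies in exactly one block. -/
def IsSetPartition {ι : Type*} [Fintype ι] (P : Finset (Finset ι)) : Prop :=
  (∀ A ∈ P, A.Nonempty) ∧ ∀ i : ι, ∃! A : Finset ι, A ∈ P ∧ i ∈ A

/-- A perfect matching: a set partition all of whose blocks have two elements. -/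
def IsPerfectMatching {ι : Type*} [Fintype ι] (P : Finset (Finset ι)) : Prop :=
  IsSetPartition P ∧ ∀ A ∈ P, A.card = 2

/-- The joint cumulant `C(ξ_1,…,ξ_N) = Σ_{π} (−1)^{#π−1}(#π−1)! Π_{A∈π} E[Π_{i∈A} ξ_i]`,
where the sum runs over all set partitions of the index set. -/
def jointCumulant {Ω : Type*} [MeasurableSpace Ω] (μ : Measure Ω)
    {ι : Type*} [Fintype ι] (ξ : ι → Ω → ℝ) : ℝ :=
  ∑ P ∈ Finset.univ.filter (fun P : Finset (Finset ι) => IsSetPartition P),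
    (-1 : ℝ) ^ (P.card - 1) * (Nat.factorial (P.card - 1) : ℝ) *
      ∏ A ∈ P, ∫ ω, (∏ i ∈ A, ξ i ω) ∂μ

/-- `E_σ(ξ) = Π_{A∈σ} E[Π_{i∈A} ξ_i]`. -/
def momProd {Ω : Type*} [MeasurableSpace Ω] (μ : Measure Ω)
    {ι : Type*} (P : Finset (Finset ι)) (ξ : ι → Ω → ℝ) : ℝ :=
  ∏ A ∈ P, ∫ ω, (∏ i ∈ A, ξ i ω) ∂μ

/-- `C_π(ξ) = Π_{A∈π} C({ξ_i}_{i∈A})`, the product over the blocks of `π` of the joint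
cumulants of the variables indexed by each block. -/
def cumProd {Ω : Type*} [MeasurableSpace Ω] (μ : Measure Ω)
    {ι : Type*} [Fintype ι] (P : Finset (Finset ι)) (ξ : ι → Ω → ℝ) : ℝ :=
  ∏ A ∈ P, jointCumulant μ (fun a : {x // x ∈ A} => ξ a.1)

/-- The relation generating the join `P ∨ Q` of two set partitions: the equivalence closure
of "lying in a common block of `P` or of `Q`". -/
def joinRel {ι : Type*} (P Q : Finset (Finset ι)) : ι → ι → Prop :=
  Relation.EqvGen fun a b => (∃ A ∈ P, a ∈ A ∧ b ∈ A) ∨ (∃ A ∈ Q, a ∈ A ∧ b ∈ A)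

/-- `B` is a block of the join `P ∨ Q`, i.e. an equivalence class of `joinRel P Q`. -/
def IsJoinBlock {ι : Type*} [Fintype ι] (P Q : Finset (Finset ι)) (B : Finset ι) : Prop :=
  ∃ a : ι, B = Finset.univ.filter (fun b => joinRel P Q a b)

/-- The set of blocks of the join `P ∨ Q`. -/
def joinBlocks {ι : Type*} [Fintype ι] (P Q : Finset (Finset ι)) : Finset (Finset ι) :=
  Finset.univ.filter (fun B : Finset ι => IsJoinBlock P Q B)

/-- `#(P ∨ Q)`, the number of blocks of the join of two set partitions. -/
def joinCard {ι : Type*} [Fintype ι] (P Q : Finset (Finset ι)) : ℕ :=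
  (joinBlocks P Q).card

/-- A word `j` is `π`-measurable if `j_α = j_β` whenever `α, β` lie in the same block. -/
def WordMeasurable {ι κ : Type*} (P : Finset (Finset ι)) (j : ι → κ) : Prop :=
  ∀ A ∈ P, ∀ a ∈ A, ∀ b ∈ A, j a = j b

/-!
Write `Z_i = r(σ i)` with the rank scores `r`. A mixed moment `E ∏_{v ∈ V} Z_v ^ c_v` over
distinct `v` is a normalized sum over permutations of a monomial; comparing `σ a` with the free
positions `p ∉ σ(V)` gives an exact recursion in `|V|` whose power-sum coefficient vanishes when
`c_a` is odd. Hence such a moment is `O(n^{-o/2})`, `o` being the number of odd exponents.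

In the expansion of the joint cumulant over set partitions, a value taken an odd number of times
overall is taken an odd number of times inside some block, so the cumulant is `O(n^{-r/2})`,
where `r` counts the values taken an odd number of times by `h` (the `l`-indices come in pairs).
Pairing the `h`-indices inside each fiber and the `r` leftover ones arbitrarily gives a perfect
matching with at most `r/2` pairs of distinct values; as `E[Z_v²] = 1` and
`E[Z_v Z_w] = -1/(n-1)`, its moment product is at least `n^{-r/2}`.
-/

namespace Equiv.Perm

variable {α R : Type*} [Fintype α] [DecidableEq α] [CommRing R]

def monomialSum (f : α → R) (V : Finset α) (c : α → ℕ) : R :=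
  ∑ σ : Perm α, ∏ v ∈ V, f (σ v) ^ c v

theorem monomialSum_empty (f : α → R) (c : α → ℕ) :
    monomialSum f ∅ c = (Fintype.card α).factorial := by
  simp [monomialSum, Fintype.card_perm]

theorem sum_sum_compl_image_eq {a : α} {V : Finset α} (ha : a ∉ V) (F : α → R)
    (G : Perm α → R) (hG : ∀ σ τ : Perm α, (∀ v ∈ V, σ v = τ v) → G σ = G τ) :
    ∑ σ : Perm α, ∑ p ∈ (V.image σ)ᶜ, F p * G σ =
      ∑ σ : Perm α, ∑ _p ∈ (V.image σ)ᶜ, F (σ a) * G σ := by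
  rw [sum_sigma', sum_sigma']
  -- `(σ, p) ↦ (swap p (σ a) * σ, σ a)` is an involution that keeps `σ` on `V` and swaps the
  -- roles of `p` and `σ a`.
  let i : (Σ _ : Perm α, α) → Σ _ : Perm α, α :=
    fun x => ⟨swap x.2 (x.1 a) * x.1, x.1 a⟩
  have hi_apply_a (x) : (i x).1 a = x.2 := by simp [i]
  have hi_apply {x} (hx : x ∈ univ.sigma fun σ : Perm α => (V.image σ)ᶜ) {v} (hv : v ∈ V) :
      (i x).1 v = x.1 v := by
    simp only [mem_sigma, mem_compl, mem_image, not_exists, not_and] at hx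
    exact swap_apply_of_ne_of_ne (hx.2 v hv) (fun h => ha (x.1.injective h ▸ hv))
  have hi_mem {x} (hx : x ∈ univ.sigma fun σ : Perm α => (V.image σ)ᶜ) :
      i x ∈ univ.sigma fun σ : Perm α => (V.image σ)ᶜ := by
    simp only [mem_sigma, mem_univ, mem_compl, mem_image, not_exists, not_and, true_and]
    intro v hv h
    rw [hi_apply hx hv] at h
    exact ha (x.1.injective h ▸ hv)
  have hii (x) : i (i x) = x := by
    obtain ⟨σ, _⟩ := x
    simp only [i, mul_apply, swap_apply_right, Sigma.mk.injEq, heq_eq_eq, and_true]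
    rw [← mul_assoc, swap_comm, swap_mul_self, one_mul]
  refine sum_nbij' i i (fun x hx => hi_mem hx) (fun x hx => hi_mem hx)
    (fun x _ => hii x) (fun x _ => hii x) fun x hx => ?_
  rw [hi_apply_a, hG _ _ fun v hv => hi_apply hx hv]

theorem card_sub_card_mul_monomialSum_insert (f : α → R) {V : Finset α} (c : α → ℕ) {a : α}
    (ha : a ∉ V) :
    ((Fintype.card α : R) - V.card) * monomialSum f (insert a V) c =
      (∑ p, f p ^ c a) * monomialSum f V c -
        ∑ u ∈ V, monomialSum f V (Function.update c u (c u + c a)) := by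
  have hswap := sum_sum_compl_image_eq ha (fun p => f p ^ c a) (fun σ => ∏ v ∈ V, f (σ v) ^ c v)
    fun σ τ h => prod_congr rfl fun v hv => by rw [h v hv]
  have hcard (σ : Perm α) : ((V.image σ)ᶜ.card : R) = Fintype.card α - V.card := by
    rw [card_compl, card_image_of_injective V σ.injective, Nat.cast_sub (card_le_univ V)]
  have hcompl (σ : Perm α) : ∑ p ∈ (V.image σ)ᶜ, f p ^ c a =
      ∑ p, f p ^ c a - ∑ u ∈ V, f (σ u) ^ c a := by
    rw [← sum_compl_add_sum (V.image σ), sum_image fun _ _ _ _ h => σ.injective h,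
      add_sub_cancel_right]
  have hmerge (σ : Perm α) {u} (hu : u ∈ V) :
      f (σ u) ^ c a * ∏ v ∈ V, f (σ v) ^ c v =
        ∏ v ∈ V, f (σ v) ^ Function.update c u (c u + c a) v := by
    have hrest : ∏ v ∈ V.erase u, f (σ v) ^ Function.update c u (c u + c a) v =
        ∏ v ∈ V.erase u, f (σ v) ^ c v :=
      prod_congr rfl fun v hv => by rw [Function.update_of_ne (ne_of_mem_erase hv)]
    rw [← mul_prod_erase V _ hu, ← mul_prod_erase V _ hu, hrest, Function.update_self, pow_add]
    ring
  calc ((Fintype.card α : R) - V.card) * monomialSum f (insert a V) c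
      = ∑ σ : Perm α, ∑ p ∈ (V.image σ)ᶜ, f (σ a) ^ c a * ∏ v ∈ V, f (σ v) ^ c v := by
        simp only [monomialSum, mul_sum, prod_insert ha, sum_const, nsmul_eq_mul, hcard]
    _ = ∑ σ : Perm α, (∑ p, f p ^ c a - ∑ u ∈ V, f (σ u) ^ c a) *
          ∏ v ∈ V, f (σ v) ^ c v := by
        rw [← hswap]
        simp only [← sum_mul, hcompl]
    _ = _ := by
        simp only [monomialSum, sub_mul, sum_sub_distrib, mul_sum, sum_mul]
        rw [sum_comm (t := V)]
        congr 1
        exact sum_congr rfl fun u hu => sum_congr rfl fun σ _ => hmerge σ hu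

theorem card_mul_monomialSum_singleton (f : α → R) (v : α) (c : α → ℕ) :
    (Fintype.card α : R) * monomialSum f {v} c =
      (∑ p, f p ^ c v) * (Fintype.card α).factorial := by
  simpa [monomialSum_empty] using card_sub_card_mul_monomialSum_insert f c (notMem_empty v)

end Equiv.Perm

namespace Finset

variable {α : Type*} [DecidableEq α]

def oddCount (V : Finset α) (c : α → ℕ) : ℕ := (V.filter fun v => Odd (c v)).card

theorem oddCount_insert_le (V : Finset α) (c : α → ℕ) (a : α) :
    oddCount (insert a V) c ≤ oddCount V c + 1 := by
  simp only [oddCount, filter_insert]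
  split_ifs
  exacts [card_insert_le _ _, Nat.le_succ _]

theorem oddCount_insert_of_even {V : Finset α} {c : α → ℕ} {a : α} (hca : Even (c a)) :
    oddCount (insert a V) c = oddCount V c := by
  simp [oddCount, filter_insert, Nat.not_odd_iff_even.2 hca]

theorem oddCount_le_of_eqOn_erase {V : Finset α} {c c' : α → ℕ} {u : α}
    (h : ∀ v ∈ V, v ≠ u → c v = c' v) : oddCount V c ≤ oddCount V c' + 1 := by
  refine (card_le_card fun v hv => ?_).trans (card_insert_le u _)
  rw [mem_filter] at hv
  rcases eq_or_ne v u with rfl | hvu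
  · exact mem_insert_self _ _
  · exact mem_insert_of_mem (mem_filter.2 ⟨hv.1, h v hv.1 hvu ▸ hv.2⟩)

theorem sum_update_add_eq_sum_insert {V : Finset α} {u a : α} (hu : u ∈ V) (ha : a ∉ V)
    (c : α → ℕ) :
    ∑ v ∈ V, Function.update c u (c u + c a) v = ∑ v ∈ insert a V, c v := by
  rw [sum_update_of_mem hu, sum_insert ha, ← add_sum_erase V c hu, sdiff_singleton_eq_erase]
  ring

theorem card_sdiff_pair {s : Finset α} {u v : α} (hu : u ∈ s) (hv : v ∈ s) (huv : u ≠ v) :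
    (s \ {u, v}).card + 2 = s.card := by
  simpa [card_pair huv] using
    card_sdiff_add_card_eq_card (insert_subset hu (singleton_subset_iff.2 hv))

theorem even_card_sdiff_pair {s : Finset α} {u v : α} (hu : u ∈ s) (hv : v ∈ s) (huv : u ≠ v)
    (hs : Even s.card) : Even (s \ {u, v}).card := by
  rw [← card_sdiff_pair hu hv huv, Nat.even_add] at hs
  exact hs.2 even_two

theorem sdiff_pair_ssubset {s : Finset α} {u v : α} (hu : u ∈ s) (hv : v ∈ s) :
    s \ {u, v} ⊂ s :=
  sdiff_ssubset (insert_subset hu (singleton_subset_iff.2 hv)) (insert_nonempty u {v})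

end Finset

theorem Fintype.abs_sum_pow_le {α : Type*} [Fintype α] {f : α → ℝ} {b : ℝ} (hf : ∀ p, |f p| ≤ b)
    (k : ℕ) : |∑ p, f p ^ k| ≤ Fintype.card α * b ^ k :=
  (abs_sum_le_sum_abs _ _).trans <| by
    simpa [abs_pow] using sum_le_sum fun p (_ : p ∈ univ) =>
      pow_le_pow_left₀ (abs_nonneg (f p)) (hf p) k

namespace Equiv.Perm

variable {α : Type*} [Fintype α] [DecidableEq α] {f : α → ℝ} {b : ℝ}

theorem abs_monomialSum_le (hf : ∀ p, |f p| ≤ b) (V : Finset α) (c : α → ℕ) :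
    |monomialSum f V c| ≤ b ^ (∑ v ∈ V, c v) * (Fintype.card α).factorial := by
  calc |monomialSum f V c| ≤ ∑ σ : Perm α, |∏ v ∈ V, f (σ v) ^ c v| :=
        abs_sum_le_sum_abs _ _
    _ ≤ ∑ _σ : Perm α, b ^ (∑ v ∈ V, c v) := by
        refine sum_le_sum fun σ _ => ?_
        rw [abs_prod, ← prod_pow_eq_pow_sum]
        exact prod_le_prod (fun _ _ => abs_nonneg _) fun v _ => by
          rw [abs_pow]; exact pow_le_pow_left₀ (abs_nonneg _) (hf _) _
    _ = _ := by simp [Fintype.card_perm, mul_comm]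

theorem abs_sum_pow_mul_monomialSum_mul_sqrt_pow_le (hf : ∀ p, |f p| ≤ b)
    (hodd : ∀ k, Odd k → ∑ p, f p ^ k = 0) {V : Finset α} {a : α} (ha : a ∉ V) {c : α → ℕ}
    {B : ℝ} (hc : |monomialSum f V c| * √(Fintype.card α) ^ oddCount V c ≤
      B * b ^ (∑ v ∈ V, c v) * (Fintype.card α).factorial) :
    |(∑ p, f p ^ c a) * monomialSum f V c| * √(Fintype.card α) ^ oddCount (insert a V) c ≤
      Fintype.card α * (B * b ^ (∑ v ∈ insert a V, c v) * (Fintype.card α).factorial) := by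
  rcases Nat.even_or_odd (c a) with hca | hca
  · rw [abs_mul, mul_assoc, oddCount_insert_of_even hca]
    calc _ ≤ (Fintype.card α * b ^ c a) * (B * b ^ (∑ v ∈ V, c v) *
          (Fintype.card α).factorial) :=
          mul_le_mul (Fintype.abs_sum_pow_le hf _) hc (by positivity)
            ((abs_nonneg _).trans (Fintype.abs_sum_pow_le hf _))
      _ = _ := by rw [sum_insert ha, pow_add]; ring
  · have hb : 0 ≤ b := (abs_nonneg _).trans (hf a)
    rw [hodd _ hca, zero_mul, abs_zero, zero_mul, sum_insert ha, pow_add]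
    calc (0 : ℝ) ≤ Fintype.card α * b ^ c a * (B * b ^ (∑ v ∈ V, c v) *
          (Fintype.card α).factorial) :=
          mul_nonneg (by positivity) ((mul_nonneg (abs_nonneg _) (by positivity)).trans hc)
      _ = _ := by ring

theorem abs_monomialSum_update_mul_sqrt_pow_le {V : Finset α} {a u : α} (ha : a ∉ V)
    (hu : u ∈ V) {c : α → ℕ} {B : ℝ}
    (hc : |monomialSum f V (Function.update c u (c u + c a))| *
        √(Fintype.card α) ^ oddCount V (Function.update c u (c u + c a)) ≤
      B * b ^ (∑ v ∈ V, Function.update c u (c u + c a) v) * (Fintype.card α).factorial) :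
    |monomialSum f V (Function.update c u (c u + c a))| *
        √(Fintype.card α) ^ oddCount (insert a V) c ≤
      Fintype.card α * (B * b ^ (∑ v ∈ insert a V, c v) * (Fintype.card α).factorial) := by
  have hx : 1 ≤ √(Fintype.card α : ℝ) :=
    Real.one_le_sqrt.2 (by exact_mod_cast Fintype.card_pos_iff.2 ⟨a⟩)
  have hO : oddCount (insert a V) c ≤ oddCount V (Function.update c u (c u + c a)) + 2 := by
    have := oddCount_le_of_eqOn_erase (V := V) (c' := Function.update c u (c u + c a))
      fun v _ hvu => (Function.update_of_ne hvu _ _).symm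
    have := oddCount_insert_le V c a
    omega
  calc _ ≤ |monomialSum f V (Function.update c u (c u + c a))| *
        (√(Fintype.card α) ^ oddCount V (Function.update c u (c u + c a)) * Fintype.card α) := by
        gcongr
        exact (pow_le_pow_right₀ hx hO).trans_eq
          (by rw [pow_add, Real.sq_sqrt (Nat.cast_nonneg _)])
    _ = Fintype.card α * (|monomialSum f V (Function.update c u (c u + c a))| *
        √(Fintype.card α) ^ oddCount V (Function.update c u (c u + c a))) := by ring
    _ ≤ _ := by
        rw [← sum_update_add_eq_sum_insert hu ha]
        gcongr

theorem abs_monomialSum_insert_mul_sqrt_pow_le (hf : ∀ p, |f p| ≤ b)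
    (hodd : ∀ k, Odd k → ∑ p, f p ^ k = 0) {V : Finset α} {a : α} (ha : a ∉ V)
    (hV : 2 * V.card + 1 ≤ Fintype.card α) {B : ℝ}
    (ih : ∀ c, |monomialSum f V c| * √(Fintype.card α) ^ oddCount V c ≤
      B * b ^ (∑ v ∈ V, c v) * (Fintype.card α).factorial) (c : α → ℕ) :
    |monomialSum f (insert a V) c| * √(Fintype.card α) ^ oddCount (insert a V) c ≤
      2 * (V.card + 1) * B * b ^ (∑ v ∈ insert a V, c v) * (Fintype.card α).factorial := by
  set n := Fintype.card α
  set T := B * b ^ (∑ v ∈ insert a V, c v) * n.factorial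
  set x := √(n : ℝ) ^ oddCount (insert a V) c
  have hn : (2 * V.card + 1 : ℝ) ≤ n := by exact_mod_cast hV
  have hsum : ((n : ℝ) - V.card) * (|monomialSum f (insert a V) c| * x) ≤
      (V.card + 1) * (n * T) := by
    rw [← mul_assoc, ← abs_of_nonneg (by linarith : (0 : ℝ) ≤ n - V.card), ← abs_mul,
      card_sub_card_mul_monomialSum_insert f c ha]
    calc _ ≤ (|(∑ p, f p ^ c a) * monomialSum f V c| +
          ∑ u ∈ V, |monomialSum f V (Function.update c u (c u + c a))|) * x := by
          gcongr
          exact (abs_sub _ _).trans (add_le_add le_rfl (abs_sum_le_sum_abs _ _))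
      _ ≤ n * T + ∑ _u ∈ V, n * T := by
          rw [add_mul, sum_mul V]
          exact add_le_add (abs_sum_pow_mul_monomialSum_mul_sqrt_pow_le hf hodd ha (ih c))
            (sum_le_sum fun u hu => abs_monomialSum_update_mul_sqrt_pow_le ha hu (ih _))
      _ = _ := by rw [sum_const, nsmul_eq_mul]; ring
  refine le_of_mul_le_mul_left ?_ (by linarith : (0 : ℝ) < n)
  calc (n : ℝ) * (|monomialSum f (insert a V) c| * x)
      ≤ 2 * (n - V.card) * (|monomialSum f (insert a V) c| * x) := by
        gcongr
        linarith
    _ = 2 * ((n - V.card) * (|monomialSum f (insert a V) c| * x)) := by ring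
    _ ≤ 2 * ((V.card + 1) * (n * T)) := by gcongr
    _ = _ := by ring

theorem abs_monomialSum_mul_sqrt_pow_le_of_two_mul_card_le (hf : ∀ p, |f p| ≤ b)
    (hodd : ∀ k, Odd k → ∑ p, f p ^ k = 0) {D : ℕ} (V : Finset α) (c : α → ℕ)
    (hD : V.card ≤ D) (hV : 2 * V.card ≤ Fintype.card α + 1) :
    |monomialSum f V c| * √(Fintype.card α) ^ oddCount V c ≤
      (2 * D) ^ V.card * b ^ (∑ v ∈ V, c v) * (Fintype.card α).factorial := by
  induction V using Finset.induction_on generalizing c with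
  | empty => simp [monomialSum_empty, oddCount]
  | insert a V ha ih =>
    rw [card_insert_of_notMem ha] at hD hV ⊢
    refine (abs_monomialSum_insert_mul_sqrt_pow_le hf hodd ha (by omega)
      (fun c => ih c (by omega) (by omega)) c).trans ?_
    have hb : 0 ≤ b := (abs_nonneg _).trans (hf a)
    rw [pow_succ, mul_comm ((2 * D : ℝ) ^ V.card)]
    gcongr
    exact_mod_cast hD

theorem abs_monomialSum_mul_sqrt_pow_le (hf : ∀ p, |f p| ≤ b)
    (hodd : ∀ k, Odd k → ∑ p, f p ^ k = 0) {D : ℕ} (V : Finset α) (c : α → ℕ)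
    (hD : V.card ≤ D) :
    |monomialSum f V c| * √(Fintype.card α) ^ oddCount V c ≤
      (2 * D) ^ V.card * b ^ (∑ v ∈ V, c v) * (Fintype.card α).factorial := by
  by_cases hV : 2 * V.card ≤ Fintype.card α + 1
  · exact abs_monomialSum_mul_sqrt_pow_le_of_two_mul_card_le hf hodd V c hD hV
  obtain ⟨a, -⟩ : V.Nonempty := card_pos.1 (by omega)
  have hn : (1 : ℝ) ≤ Fintype.card α := by exact_mod_cast Fintype.card_pos_iff.2 ⟨a⟩
  have hnD : (Fintype.card α : ℝ) ≤ 2 * D := by exact_mod_cast (by omega : _ ≤ 2 * D)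
  have hpow : √(Fintype.card α) ^ oddCount V c ≤ (2 * D) ^ V.card :=
    calc _ ≤ √(Fintype.card α : ℝ) ^ V.card :=
          pow_le_pow_right₀ (Real.one_le_sqrt.2 hn) (card_filter_le _ _)
      _ ≤ _ := by
          gcongr
          exact (Real.sqrt_le_self_iff.2 (Or.inr hn)).trans hnD
  calc _ ≤ b ^ (∑ v ∈ V, c v) * (Fintype.card α).factorial * (2 * D) ^ V.card :=
        mul_le_mul (abs_monomialSum_le hf V c) hpow (by positivity)
          ((abs_nonneg _).trans (abs_monomialSum_le hf V c))
    _ = _ := by ring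

end Equiv.Perm

def rankScore (n : ℕ) (p : Fin n) : ℝ :=
  √(12 / ((n : ℝ) ^ 2 - 1)) * ((p : ℕ) + 1 - ((n : ℝ) + 1) / 2)

theorem Zr_eq_rankScore (n : ℕ) (i : Fin n) (σ : Equiv.Perm (Fin n)) :
    Zr n i σ = rankScore n (σ i) := rfl

theorem rankScore_rev (n : ℕ) (p : Fin n) : rankScore n p.rev = -rankScore n p := by
  have hp : ((p.rev : ℕ) : ℝ) = n - (p : ℕ) - 1 := by
    rw [Fin.val_rev, Nat.cast_sub (by omega : (p : ℕ) + 1 ≤ n)]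
    push_cast
    ring
  rw [rankScore, rankScore, hp]
  ring

theorem sum_rankScore_pow_of_odd (n : ℕ) {k : ℕ} (hk : Odd k) :
    ∑ p, rankScore n p ^ k = 0 := by
  have h := Equiv.sum_comp (Fin.revPerm : Equiv.Perm (Fin n)) (fun p => rankScore n p ^ k)
  simp only [Fin.revPerm_apply, rankScore_rev, hk.neg_pow, sum_neg_distrib] at h
  linarith

theorem sum_range_add_one_sub_sq (n : ℕ) (a : ℝ) :
    ∑ i ∈ range n, ((i : ℝ) + 1 - a) ^ 2 =
      n * (n + 1) * (2 * n + 1) / 6 - a * n * (n + 1) + n * a ^ 2 := by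
  induction n with
  | zero => simp
  | succ n ih =>
    rw [sum_range_succ, ih]
    push_cast
    ring

theorem sum_rankScore_sq {n : ℕ} (hn : 2 ≤ n) : ∑ p, rankScore n p ^ 2 = n := by
  have hn' : (0 : ℝ) < (n : ℝ) ^ 2 - 1 := by
    have : (2 : ℝ) ≤ n := by exact_mod_cast hn
    nlinarith
  simp only [rankScore, mul_pow, Real.sq_sqrt (div_nonneg (by norm_num : (0 : ℝ) ≤ 12) hn'.le),
    ← mul_sum]
  rw [Fin.sum_univ_eq_sum_range (fun i => ((i : ℝ) + 1 - ((n : ℝ) + 1) / 2) ^ 2),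
    sum_range_add_one_sub_sq]
  field_simp
  ring

theorem abs_rankScore_le {n : ℕ} (hn : 2 ≤ n) (p : Fin n) : |rankScore n p| ≤ 2 := by
  have hn' : (2 : ℝ) ≤ n := by exact_mod_cast hn
  have hp : ((p : ℕ) : ℝ) + 1 ≤ n := by exact_mod_cast p.isLt
  refine abs_le_of_sq_le_sq ?_ zero_le_two
  rw [rankScore, mul_pow, Real.sq_sqrt (div_nonneg (by norm_num : (0 : ℝ) ≤ 12) (by nlinarith)),
    div_mul_eq_mul_div, div_le_iff₀ (by nlinarith)]
  nlinarith [(p : ℕ).cast_nonneg (α := ℝ)]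

instance (n : ℕ) : DiscreteMeasurableSpace (Equiv.Perm (Fin n)) :=
  ⟨fun _ => MeasurableSpace.measurableSet_top⟩

theorem integral_permMeasure (n : ℕ) (g : Equiv.Perm (Fin n) → ℝ) :
    ∫ σ, g σ ∂permMeasure n = (∑ σ, g σ) / n.factorial := by
  rw [permMeasure, integral_fintype (hf := .of_finite), sum_div]
  refine sum_congr rfl fun σ _ => ?_
  simp [Measure.real, PMF.toMeasure_apply_singleton _ _ (MeasurableSet.singleton σ),
    Fintype.card_perm, div_eq_inv_mul]

theorem integral_prod_Zr {ι : Type*} {n : ℕ} (idx : ι → Fin n) (A : Finset ι) :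
    ∫ σ, ∏ i ∈ A, Zr n (idx i) σ ∂permMeasure n =
      Equiv.Perm.monomialSum (rankScore n) (A.image idx) (fun v => (A.filter (idx · = v)).card) /
        n.factorial := by
  simp only [integral_permMeasure, Equiv.Perm.monomialSum, Zr_eq_rankScore]
  congr 1
  exact sum_congr rfl fun σ _ => prod_comp (fun v => rankScore n (σ v)) idx

theorem monomialSum_rankScore_singleton_two {n : ℕ} (hn : 2 ≤ n) (v : Fin n) {c : Fin n → ℕ}
    (hc : c v = 2) : Equiv.Perm.monomialSum (rankScore n) {v} c = n.factorial := by
  have h := Equiv.Perm.card_mul_monomialSum_singleton (rankScore n) v c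
  rw [hc, sum_rankScore_sq hn, Fintype.card_fin] at h
  exact mul_left_cancel₀ (by positivity) h

theorem integral_Zr_mul_self {n : ℕ} (hn : 2 ≤ n) (v : Fin n) :
    ∫ σ, Zr n v σ * Zr n v σ ∂permMeasure n = 1 := by
  have h : ∑ σ : Equiv.Perm (Fin n), rankScore n (σ v) * rankScore n (σ v) =
      Equiv.Perm.monomialSum (rankScore n) {v} (fun _ => 2) := by
    simp [Equiv.Perm.monomialSum, sq]
  simp only [integral_permMeasure, Zr_eq_rankScore, h,
    monomialSum_rankScore_singleton_two hn v (c := fun _ => 2) rfl]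
  exact div_self (by positivity)

theorem integral_Zr_mul_of_ne {n : ℕ} (hn : 2 ≤ n) {v w : Fin n} (hvw : v ≠ w) :
    ∫ σ, Zr n v σ * Zr n w σ ∂permMeasure n = -1 / ((n : ℝ) - 1) := by
  have h : ∑ σ : Equiv.Perm (Fin n), rankScore n (σ v) * rankScore n (σ w) =
      Equiv.Perm.monomialSum (rankScore n) {w, v} (fun _ => 1) := by
    simp [Equiv.Perm.monomialSum, prod_insert (notMem_singleton.2 hvw.symm), mul_comm]
  have hrec := Equiv.Perm.card_sub_card_mul_monomialSum_insert (rankScore n) (fun _ => 1)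
    (notMem_singleton.2 hvw.symm)
  rw [sum_rankScore_pow_of_odd n odd_one, zero_mul, zero_sub, sum_singleton,
    monomialSum_rankScore_singleton_two hn v (by simp), card_singleton, Fintype.card_fin] at hrec
  have hn1 : (0 : ℝ) < n - 1 := by
    have : (2 : ℝ) ≤ n := by exact_mod_cast hn
    linarith
  simp only [integral_permMeasure, Zr_eq_rankScore, h]
  rw [div_eq_div_iff (by positivity) hn1.ne']
  push_cast at hrec
  linarith

section OddFibers

variable {γ κ : Type*} [DecidableEq κ]

def oddFibers (f : γ → κ) (s : Finset γ) : Finset κ :=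
  (s.image f).filter fun v => Odd (s.filter (f · = v)).card

def nonconstantBlocks (f : γ → κ) (P : Finset (Finset γ)) : Finset (Finset γ) :=
  P.filter fun A => ∃ x ∈ A, ∃ y ∈ A, f x ≠ f y

theorem mem_oddFibers {f : γ → κ} {s : Finset γ} {v : κ} :
    v ∈ oddFibers f s ↔ Odd (s.filter (f · = v)).card := by
  refine ⟨fun h => (mem_filter.1 h).2, fun h => mem_filter.2 ⟨?_, h⟩⟩
  obtain ⟨x, hx⟩ := card_pos.1 h.pos
  exact mem_image.2 ⟨x, (mem_filter.1 hx).1, (mem_filter.1 hx).2⟩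

theorem card_oddFibers (f : γ → κ) (s : Finset γ) :
    (oddFibers f s).card = oddCount (s.image f) fun v => (s.filter (f · = v)).card := rfl

theorem card_oddFibers_of_injOn {f : γ → κ} {s : Finset γ} (hf : Set.InjOn f s) :
    (oddFibers f s).card = s.card := by
  rw [← card_image_of_injOn hf, oddFibers, filter_true_of_mem]
  intro w hw
  obtain ⟨x, hx, rfl⟩ := mem_image.1 hw
  rw [card_eq_one.2 ⟨x, ext fun y => ?_⟩]
  · exact odd_one
  simp only [mem_filter, mem_singleton]
  exact ⟨fun h => hf h.1 hx h.2, by rintro rfl; exact ⟨hx, rfl⟩⟩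

end OddFibers

theorem Finpartition.isSetPartition {ι : Type*} [Fintype ι] [DecidableEq ι]
    (P : Finpartition (univ : Finset ι)) : IsSetPartition P.parts :=
  ⟨fun _ hA => P.nonempty_of_mem_parts hA, fun i => P.existsUnique_mem (mem_univ i)⟩

namespace IsSetPartition

variable {ι : Type*} [Fintype ι] {P : Finset (Finset ι)}

theorem card_filter_mem (hP : IsSetPartition P) (i : ι) : (P.filter (i ∈ ·)).card = 1 := by
  obtain ⟨A, hA, huniq⟩ := hP.2 i
  refine card_eq_one.2 ⟨A, ext fun B => ?_⟩
  simp only [mem_filter, mem_singleton]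
  exact ⟨fun hB => huniq B hB, fun h => h ▸ hA⟩

theorem sum_card_filter (hP : IsSetPartition P) (p : ι → Prop) [DecidablePred p] :
    ∑ A ∈ P, (A.filter p).card = (univ.filter p).card := by
  have h := sum_card_inter (s := univ.filter p) fun i _ => hP.card_filter_mem i
  rw [mul_one] at h
  rw [← h]
  refine sum_congr rfl fun A _ => congrArg card (ext fun i => ?_)
  simp [and_comm]

theorem card_le (hP : IsSetPartition P) : P.card ≤ Fintype.card ι := by
  have h := hP.sum_card_filter fun _ => True
  simp only [filter_true] at h
  rw [card_eq_sum_ones, ← card_univ, ← h]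
  exact sum_le_sum fun A hA => card_pos.2 (hP.1 A hA)

theorem card_oddFibers_univ_le {κ : Type*} [DecidableEq κ] (hP : IsSetPartition P)
    (f : ι → κ) : (oddFibers f univ).card ≤ ∑ A ∈ P, (oddFibers f A).card := by
  refine (card_le_card fun v hv => ?_).trans card_biUnion_le
  rw [mem_oddFibers, ← hP.sum_card_filter, odd_sum_iff_odd_card_odd] at hv
  obtain ⟨A, hA⟩ := card_pos.1 hv.pos
  rw [mem_filter] at hA
  exact mem_biUnion.2 ⟨A, hA.1, mem_oddFibers.2 hA.2⟩

end IsSetPartition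

theorem IsSetPartition.prod_abs_integral_mul_pow_le {Ω ι : Type*} [MeasurableSpace Ω]
    {μ : Measure Ω} [Fintype ι] {ξ : ι → Ω → ℝ} {P : Finset (Finset ι)} (hP : IsSetPartition P)
    (d : Finset ι → ℕ) {r : ℕ} (hr : r ≤ ∑ A ∈ P, d A) {x K : ℝ} (hx : 1 ≤ x)
    (hmom : ∀ A : Finset ι, |∫ ω, ∏ i ∈ A, ξ i ω ∂μ| * x ^ d A ≤ K ^ A.card) :
    (∏ A ∈ P, |∫ ω, ∏ i ∈ A, ξ i ω ∂μ|) * x ^ r ≤ K ^ Fintype.card ι := by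
  have hcard : ∑ A ∈ P, A.card = Fintype.card ι := by
    simpa using hP.sum_card_filter fun _ => True
  calc _ ≤ (∏ A ∈ P, |∫ ω, ∏ i ∈ A, ξ i ω ∂μ|) * x ^ (∑ A ∈ P, d A) := by gcongr
    _ = ∏ A ∈ P, |∫ ω, ∏ i ∈ A, ξ i ω ∂μ| * x ^ d A := by
        rw [← prod_pow_eq_pow_sum, prod_mul_distrib]
    _ ≤ ∏ A ∈ P, K ^ A.card :=
        prod_le_prod (fun _ _ => by positivity) fun A _ => hmom A
    _ = _ := by rw [prod_pow_eq_pow_sum, hcard]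

theorem abs_jointCumulant_mul_pow_le {Ω ι : Type*} [MeasurableSpace Ω] (μ : Measure Ω)
    [Fintype ι] (ξ : ι → Ω → ℝ) (d : Finset ι → ℕ) {r : ℕ}
    (hr : ∀ P, IsSetPartition P → r ≤ ∑ A ∈ P, d A) {x K : ℝ} (hx : 1 ≤ x) (hK : 0 ≤ K)
    (hmom : ∀ A : Finset ι, |∫ ω, ∏ i ∈ A, ξ i ω ∂μ| * x ^ d A ≤ K ^ A.card) :
    |jointCumulant μ ξ| * x ^ r ≤
      2 ^ 2 ^ Fintype.card ι * (Fintype.card ι).factorial * K ^ Fintype.card ι := by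
  set N := Fintype.card ι
  have hterm (P) (hP : P ∈ univ.filter fun P : Finset (Finset ι) => IsSetPartition P) :
      |(-1 : ℝ) ^ (P.card - 1) * ((P.card - 1).factorial : ℝ) *
        ∏ A ∈ P, ∫ ω, ∏ i ∈ A, ξ i ω ∂μ| * x ^ r ≤ N.factorial * K ^ N := by
    have hP' := (mem_filter.1 hP).2
    rw [abs_mul, abs_mul, abs_pow, abs_neg, abs_one, one_pow, one_mul, Nat.abs_cast,
      abs_prod, mul_assoc]
    exact mul_le_mul (by exact_mod_cast Nat.factorial_le (by have := hP'.card_le; omega))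
      (hP'.prod_abs_integral_mul_pow_le d (hr P hP') hx hmom) (by positivity) (by positivity)
  have hcount : ((univ.filter fun P : Finset (Finset ι) => IsSetPartition P).card : ℝ) ≤
      2 ^ 2 ^ N := by
    exact_mod_cast (card_le_univ _).trans_eq (by simp [Fintype.card_finset, N])
  calc |jointCumulant μ ξ| * x ^ r
      ≤ ∑ P ∈ univ.filter fun P : Finset (Finset ι) => IsSetPartition P,
          |(-1 : ℝ) ^ (P.card - 1) * ((P.card - 1).factorial : ℝ) *
            ∏ A ∈ P, ∫ ω, ∏ i ∈ A, ξ i ω ∂μ| * x ^ r := by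
        rw [← sum_mul, jointCumulant]
        gcongr
        exact abs_sum_le_sum_abs _ _
    _ ≤ _ := by
        refine (sum_le_sum hterm).trans ?_
        rw [sum_const, nsmul_eq_mul, mul_assoc]
        gcongr

section PairMatchings

variable {γ κ : Type*} [DecidableEq γ] [DecidableEq κ]

theorem Finpartition.exists_parts_eq_insert_pair {s : Finset γ} {u v : γ} (hu : u ∈ s)
    (hv : v ∈ s) (P : Finpartition (s \ {u, v})) :
    ∃ Q : Finpartition s, Q.parts = insert {u, v} P.parts :=
  ⟨P.extend (b := {u, v}) (insert_nonempty u {v}).ne_empty disjoint_sdiff_self_left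
    (sdiff_union_of_subset (insert_subset hu (singleton_subset_iff.2 hv))), rfl⟩

theorem Finpartition.exists_card_parts_eq_two (s : Finset γ) (hs : Even s.card) :
    ∃ P : Finpartition s, ∀ A ∈ P.parts, A.card = 2 := by
  induction s using strongInduction with
  | H s ih =>
    rcases s.eq_empty_or_nonempty with rfl | ⟨u, hu⟩
    · exact ⟨Finpartition.empty _, by simp⟩
    obtain ⟨v, hv⟩ : (s.erase u).Nonempty := by
      rw [← card_pos, card_erase_of_mem hu]
      have := hs.two_dvd
      have := card_pos.2 ⟨u, hu⟩
      omega
    have huv : u ≠ v := (ne_of_mem_erase hv).symm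
    have hv := mem_of_mem_erase hv
    obtain ⟨P, hP⟩ := ih _ (sdiff_pair_ssubset hu hv) (even_card_sdiff_pair hu hv huv hs)
    obtain ⟨Q, hQ⟩ := Finpartition.exists_parts_eq_insert_pair hu hv P
    refine ⟨Q, fun A hA => ?_⟩
    rw [hQ, mem_insert] at hA
    rcases hA with rfl | hA
    exacts [card_pair huv, hP A hA]

theorem oddFibers_sdiff_pair {f : γ → κ} {s : Finset γ} {u v : γ} (hu : u ∈ s) (hv : v ∈ s)
    (huv : u ≠ v) (hf : f u = f v) : oddFibers f (s \ {u, v}) = oddFibers f s := by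
  ext w
  have hfib : (s \ {u, v}).filter (f · = w) = s.filter (f · = w) \ {u, v} := by
    ext; simp only [mem_filter, mem_sdiff]; tauto
  rw [mem_oddFibers, mem_oddFibers, hfib]
  by_cases hw : f u = w
  · rw [← card_sdiff_pair (mem_filter.2 ⟨hu, hw⟩) (mem_filter.2 ⟨hv, hf ▸ hw⟩) huv]
    simp [Nat.odd_add]
  · rw [sdiff_eq_self_of_disjoint]
    simp only [disjoint_insert_right, disjoint_singleton_right, mem_filter, not_and]
    exact ⟨fun _ => hw, fun _ h => hw (hf.trans h)⟩

theorem Finpartition.exists_pairs_two_mul_card_nonconstant_le (f : γ → κ) (s : Finset γ)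
    (hs : Even s.card) :
    ∃ P : Finpartition s, (∀ A ∈ P.parts, A.card = 2) ∧
      2 * (nonconstantBlocks f P.parts).card ≤ (oddFibers f s).card := by
  induction s using strongInduction with
  | H s ih =>
    -- Remove a pair with equal values if there is one; otherwise every fiber is a singleton,
    -- so any pairing has at most `|s| / 2 = |oddFibers f s| / 2` pairs with distinct values.
    by_cases hdup : ∃ u ∈ s, ∃ v ∈ s, u ≠ v ∧ f u = f v
    · obtain ⟨u, hu, v, hv, huv, hf⟩ := hdup
      obtain ⟨P, hP, hPodd⟩ :=
        ih _ (sdiff_pair_ssubset hu hv) (even_card_sdiff_pair hu hv huv hs)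
      obtain ⟨Q, hQ⟩ := Finpartition.exists_parts_eq_insert_pair hu hv P
      refine ⟨Q, fun A hA => ?_, ?_⟩
      · rw [hQ, mem_insert] at hA
        rcases hA with rfl | hA
        exacts [card_pair huv, hP A hA]
      · have hconst : ¬ ∃ x ∈ ({u, v} : Finset γ), ∃ y ∈ ({u, v} : Finset γ), f x ≠ f y := by
          simp [hf]
        rwa [hQ, nonconstantBlocks, filter_insert, if_neg hconst,
          ← oddFibers_sdiff_pair hu hv huv hf]
    · push Not at hdup
      obtain ⟨P, hP⟩ := Finpartition.exists_card_parts_eq_two s hs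
      refine ⟨P, hP, ?_⟩
      rw [card_oddFibers_of_injOn fun x hx y hy h => by_contra fun hne => hdup x hx y hy hne h,
        ← P.sum_card_parts, sum_congr rfl hP, sum_const, smul_eq_mul]
      have := card_filter_le P.parts fun A => ∃ x ∈ A, ∃ y ∈ A, f x ≠ f y
      rw [nonconstantBlocks]
      omega

end PairMatchings

theorem oddFibers_sum_elim_univ {β γ κ : Type*} [Fintype β] [Fintype γ] [DecidableEq κ]
    (g : β → κ) (h : γ → κ) :
    oddFibers (Sum.elim (fun i : β × Fin 2 => g i.1) h) univ = oddFibers h univ := by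
  ext v
  have hfib : (univ.filter (Sum.elim (fun i : β × Fin 2 => g i.1) h · = v)).card =
      2 * (univ.filter (g · = v)).card + (univ.filter (h · = v)).card := by
    simp only [card_filter, Fintype.sum_sum_type, Sum.elim_inl, Sum.elim_inr,
      Fintype.sum_prod_type, Fin.sum_univ_two, mul_sum, two_mul]
    rfl
  rw [mem_oddFibers, mem_oddFibers, hfib, Nat.odd_iff, Nat.odd_iff]
  omega

theorem one_div_le_abs_integral_Zr_mul {n : ℕ} (hn : 2 ≤ n) (v w : Fin n) :
    1 / (n : ℝ) ≤ |∫ σ, Zr n v σ * Zr n w σ ∂permMeasure n| := by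
  have hn' : (2 : ℝ) ≤ n := by exact_mod_cast hn
  rcases eq_or_ne v w with rfl | hvw
  · rw [integral_Zr_mul_self hn, abs_one, div_le_one (by linarith)]
    linarith
  · rw [integral_Zr_mul_of_ne hn hvw, abs_div, abs_neg, abs_one,
      abs_of_pos (by linarith : (0 : ℝ) < n - 1)]
    exact one_div_le_one_div_of_le (by linarith) (by linarith)

theorem one_div_pow_le_abs_momProd {ι : Type*} {n : ℕ} (hn : 2 ≤ n) (h : ι → Fin n)
    {P : Finset (Finset ι)} (hP : ∀ A ∈ P, A.card = 2) :
    (1 / (n : ℝ)) ^ (nonconstantBlocks h P).card ≤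
      |momProd (permMeasure n) P fun a => Zr n (h a)| := by
  rw [momProd, abs_prod]
  calc _ = ∏ A ∈ P, if ∃ x ∈ A, ∃ y ∈ A, h x ≠ h y then 1 / (n : ℝ) else 1 := by
        rw [prod_ite, nonconstantBlocks, prod_const, prod_const, one_pow, mul_one]
    _ ≤ _ := by
        refine prod_le_prod (fun _ _ => by positivity) fun A hA => ?_
        obtain ⟨x, y, hxy, rfl⟩ := card_eq_two.1 (hP A hA)
        simp only [prod_pair hxy]
        split_ifs with hne
        · exact one_div_le_abs_integral_Zr_mul hn _ _
        · push Not at hne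
          rw [hne x (mem_insert_self x _) y (mem_insert_of_mem (mem_singleton_self y)),
            integral_Zr_mul_self hn, abs_one]

theorem abs_integral_prod_Zr_mul_sqrt_pow_le {ι : Type*} {n : ℕ} (hn : 2 ≤ n) (idx : ι → Fin n)
    (A : Finset ι) {D : ℕ} (hA : A.card ≤ D) :
    |∫ σ, ∏ i ∈ A, Zr n (idx i) σ ∂permMeasure n| * √(n : ℝ) ^ (oddFibers idx A).card ≤
      (4 * D) ^ A.card := by
  have h := Equiv.Perm.abs_monomialSum_mul_sqrt_pow_le (abs_rankScore_le hn)
    (fun _ => sum_rankScore_pow_of_odd n) (A.image idx) (fun v => (A.filter (idx · = v)).card)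
    (card_image_le.trans hA)
  rw [Fintype.card_fin, ← card_eq_sum_card_image, ← card_oddFibers] at h
  have hfac : (0 : ℝ) < n.factorial := by positivity
  rw [integral_prod_Zr, abs_div, abs_of_pos hfac, div_mul_eq_mul_div, div_le_iff₀ hfac]
  refine h.trans (mul_le_mul_of_nonneg_right ?_ hfac.le)
  rcases A.eq_empty_or_nonempty with rfl | hA0
  · simp
  have hD : (1 : ℝ) ≤ 2 * D := by
    have : 1 ≤ D := hA0.card_pos.trans_le hA
    exact_mod_cast (by omega : 1 ≤ 2 * D)
  rw [show (4 * D : ℝ) ^ A.card = (2 * D) ^ A.card * 2 ^ A.card by rw [← mul_pow]; ring]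
  gcongr
  exact card_image_le

theorem abs_jointCumulant_Zr_mul_sqrt_pow_le {ι : Type*} [Fintype ι] {n : ℕ} (hn : 2 ≤ n)
    (idx : ι → Fin n) :
    |jointCumulant (permMeasure n) fun i => Zr n (idx i)| *
        √(n : ℝ) ^ (oddFibers idx univ).card ≤
      2 ^ 2 ^ Fintype.card ι * (Fintype.card ι).factorial * (4 * Fintype.card ι) ^ Fintype.card ι :=
  abs_jointCumulant_mul_pow_le _ _ (fun A => (oddFibers idx A).card)
    (fun _ hP => hP.card_oddFibers_univ_le idx)
    (Real.one_le_sqrt.2 (by exact_mod_cast (by omega : 1 ≤ n))) (by positivity)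
    fun A => abs_integral_prod_Zr_mul_sqrt_pow_le hn idx A (card_le_univ A)

theorem exists_isPerfectMatching_one_le_sqrt_pow_mul_abs_momProd {ι : Type*} [Fintype ι]
    (hι : Even (Fintype.card ι)) {n : ℕ} (hn : 2 ≤ n) (h : ι → Fin n) :
    ∃ P : Finset (Finset ι), IsPerfectMatching P ∧
      1 ≤ √(n : ℝ) ^ (oddFibers h univ).card *
        |momProd (permMeasure n) P fun a => Zr n (h a)| := by
  classical
  obtain ⟨P, hP, hcross⟩ :=
    Finpartition.exists_pairs_two_mul_card_nonconstant_le h univ (by rwa [card_univ])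
  refine ⟨P.parts, ⟨P.isSetPartition, hP⟩, ?_⟩
  have hn' : (0 : ℝ) < n := by positivity
  calc (1 : ℝ) = (n : ℝ) ^ (nonconstantBlocks h P.parts).card *
        (1 / n) ^ (nonconstantBlocks h P.parts).card := by
        rw [← mul_pow, mul_one_div_cancel hn'.ne', one_pow]
    _ = √(n : ℝ) ^ (2 * (nonconstantBlocks h P.parts).card) *
        (1 / n) ^ (nonconstantBlocks h P.parts).card := by
        rw [pow_mul, Real.sq_sqrt hn'.le]
    _ ≤ _ := by
        gcongr
        · exact Real.one_le_sqrt.2 (by exact_mod_cast (by omega : 1 ≤ n))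
        · exact one_div_pow_le_abs_momProd hn h hP

theorem spearman_cumulant_crude_bound_general (s t : ℕ) :
    ∃ C : ℝ, ∀ n : ℕ, 2 ≤ n → ∀ l : Fin s → Fin n, ∀ h : Fin (2 * t) → Fin n,
      |jointCumulant (permMeasure n)
          (fun x : (Fin s × Fin 2) ⊕ Fin (2 * t) =>
            Sum.elim (fun i : Fin s × Fin 2 => Zr n (l i.1)) (fun a => Zr n (h a)) x)| ≤
        C * ∑ P ∈ Finset.univ.filter
              (fun P : Finset (Finset (Fin (2 * t))) => IsPerfectMatching P),
            |momProd (permMeasure n) P (fun a => Zr n (h a))| := by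
  obtain ⟨N, hN⟩ : ∃ N, Fintype.card ((Fin s × Fin 2) ⊕ Fin (2 * t)) = N := ⟨_, rfl⟩
  refine ⟨2 ^ 2 ^ N * N.factorial * (4 * N) ^ N, fun n hn l h => ?_⟩
  set idx := Sum.elim (fun i : Fin s × Fin 2 => l i.1) h
  have hξ : (fun x => Sum.elim (fun i : Fin s × Fin 2 => Zr n (l i.1)) (fun a => Zr n (h a)) x) =
      fun x => Zr n (idx x) := by
    funext x; cases x <;> rfl
  have hcum := abs_jointCumulant_Zr_mul_sqrt_pow_le hn idx
  rw [oddFibers_sum_elim_univ, hN] at hcum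
  obtain ⟨P, hP, hmom⟩ := exists_isPerfectMatching_one_le_sqrt_pow_mul_abs_momProd (by simp) hn h
  rw [hξ]
  calc _ ≤ |jointCumulant (permMeasure n) fun x => Zr n (idx x)| *
        (√(n : ℝ) ^ (oddFibers h univ).card * |momProd (permMeasure n) P fun a => Zr n (h a)|) :=
        le_mul_of_one_le_right (abs_nonneg _) hmom
    _ ≤ 2 ^ 2 ^ N * N.factorial * (4 * N) ^ N *
        |momProd (permMeasure n) P fun a => Zr n (h a)| := by
        rw [← mul_assoc]
        exact mul_le_mul_of_nonneg_right hcum (abs_nonneg _)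
    _ ≤ _ := by
        gcongr
        exact single_le_sum (f := fun P => |momProd (permMeasure n) P fun a => Zr n (h a)|)
          (fun _ _ => abs_nonneg _) (mem_filter.2 ⟨mem_univ _, hP⟩)

/-- Crude bound: for `s + t ≥ 3`, `t ≥ 1`, the joint cumulant of
`(Z_{l_1},Z_{l_1},…,Z_{l_s},Z_{l_s},Z_{h_1},…,Z_{h_{2t}})` (each `l`-index appearing twice)
is bounded by `C·Σ_{σ ∈ L_{2t}^2} |E_σ(Z_{h_1},…,Z_{h_{2t}})|`, the sum running over the
perfect matchings of `{1,…,2t}`. -/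
theorem spearman_cumulant_crude_bound (s t : ℕ) (hst : 3 ≤ s + t) (ht : 1 ≤ t) :
    ∃ C : ℝ, ∀ n : ℕ, 2 ≤ n → ∀ l : Fin s → Fin n, ∀ h : Fin (2 * t) → Fin n,
      |jointCumulant (permMeasure n)
          (fun x : (Fin s × Fin 2) ⊕ Fin (2 * t) =>
            Sum.elim (fun i : Fin s × Fin 2 => Zr n (l i.1)) (fun a => Zr n (h a)) x)| ≤
        C * ∑ P ∈ Finset.univ.filter
              (fun P : Finset (Finset (Fin (2 * t))) => IsPerfectMatching P),
            |momProd (permMeasure n) P (fun a => Zr n (h a))| :=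
  spearman_cumulant_crude_bound_general s t
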